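/- Let D be a triangulated category, m a positive integer, and let ℰ and ℋ' be m-extended hearts on D such that ℰ ≤ ℋ' (i.e. ℰ ⊆ ℋ'[m] * ℋ' and ℋ' ⊆ ℰ * ℰ[-m]). Then (ℋ' ∩ ℰ, ℋ' ∩ ℰ[-m]) is an s-torsion pair in ℋ'. -/

import Mathlib

open CategoryTheory Category Limits Pretriangulated

universe v u

variable (D : Type u) [Category.{v} D] [Preadditive D] [HasZeroObject D]
  [HasShift D ℤ] [∀ n : ℤ, (shiftFunctor D n).Additive]
  [Pretriangulated D] [HasBinaryBiproducts D]

/-- `shiftSet D S n` is the full subcategory `S[n]`: objects isomorphic to `X⟦n⟧`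
with `X ∈ S`. -/
def shiftSet (S : Set D) (n : ℤ) : Set D :=
  {A | ∃ B ∈ S, Nonempty (A ≅ B⟦n⟧)}

/-- `starSet D X Y` is `X * Y`: the class of objects `A` admitting a distinguished
triangle `X → A → Y → X[1]` with `X ∈ 𝒳` and `Y ∈ 𝒴`. -/
def starSet (X Y : Set D) : Set D :=
  {A | ∃ (B C : D) (f : B ⟶ A) (g : A ⟶ C) (h : C ⟶ B⟦(1 : ℤ)⟧),
    B ∈ X ∧ C ∈ Y ∧ Triangle.mk f g h ∈ distTriang D}

/-- `Hom(X, Y) = 0`: every morphism from an object of `X` to an object of `Y` is zero. -/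
def homZero (X Y : Set D) : Prop :=
  ∀ A ∈ X, ∀ B ∈ Y, ∀ f : A ⟶ B, f = 0

/-- a class of objects closed under isomorphisms -/
def isoClosed (S : Set D) : Prop :=
  ∀ ⦃A B : D⦄, (A ≅ B) → A ∈ S → B ∈ S

/-- an additive full subcategory (closed under isomorphisms) which is closed under
direct summands -/
structure AdditiveClosed (S : Set D) : Prop where
  iso : isoClosed D S
  zero : ∀ Z : D, IsZero Z → Z ∈ S
  sum : ∀ A ∈ S, ∀ B ∈ S, (A ⊞ B) ∈ S
  summand : ∀ A ∈ S, ∀ (X : D) (i : X ⟶ A) (p : A ⟶ X), i ≫ p = 𝟙 X → X ∈ S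

/-- a torsion pair `(U, V)` in the triangulated category `D` -/
structure IsTorsionPair (U V : Set D) : Prop where
  addU : AdditiveClosed D U
  addV : AdditiveClosed D V
  hom_zero : homZero D U V
  cover : ∀ A : D, A ∈ starSet D U V

/-- `t₁ ≼ t₂` for torsion pairs in a triangulated category: `U₁ ⊆ U₂` and `U₁[1] ⊆ U₂`. -/
def torsLE (U₁ U₂ : Set D) : Prop :=
  U₁ ⊆ U₂ ∧ shiftSet D U₁ 1 ⊆ U₂

/-- a torsion pair `(T, F)` in an (extension-closed) full subcategory `H` of `D`:
`T` and `F` are additive subcategories of `H` closed under direct summands,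
`Hom(T, F) = 0`, and every object of `H` admits a distinguished triangle
`T → X → F → T[1]` with `T ∈ 𝒯`, `F ∈ ℱ`. -/
structure IsTorsionPairIn (H T F : Set D) : Prop where
  subT : T ⊆ H
  subF : F ⊆ H
  isoT : ∀ ⦃A B : D⦄, (A ≅ B) → A ∈ T → B ∈ H → B ∈ T
  isoF : ∀ ⦃A B : D⦄, (A ≅ B) → A ∈ F → B ∈ H → B ∈ F
  zeroT : ∀ Z : D, IsZero Z → Z ∈ H → Z ∈ T
  zeroF : ∀ Z : D, IsZero Z → Z ∈ H → Z ∈ F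
  sumT : ∀ A ∈ T, ∀ B ∈ T, (A ⊞ B) ∈ T
  sumF : ∀ A ∈ F, ∀ B ∈ F, (A ⊞ B) ∈ F
  summandT : ∀ A ∈ T, ∀ (X : D) (i : X ⟶ A) (p : A ⟶ X), i ≫ p = 𝟙 X → X ∈ H → X ∈ T
  summandF : ∀ A ∈ F, ∀ (X : D) (i : X ⟶ A) (p : A ⟶ X), i ≫ p = 𝟙 X → X ∈ H → X ∈ F
  hom_zero : homZero D T F
  cover : ∀ A ∈ H, A ∈ starSet D T F

/-- an `s`-torsion pair in `H`: a torsion pair with moreover `Hom(T, F[-1]) = 0`. -/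
structure IsSTorsionPairIn (H T F : Set D) extends IsTorsionPairIn D H T F : Prop where
  neg_hom_zero : ∀ A ∈ T, ∀ B ∈ F, ∀ f : A ⟶ B⟦(-1 : ℤ)⟧, f = 0

/-- the relation `≼` for torsion pairs in a subcategory `H`:
`Hom(T, F') = 0` and `Hom(T, F'[-1]) = 0`. -/
def torsLEIn (T F' : Set D) : Prop :=
  homZero D T F' ∧ homZero D T (shiftSet D F' (-1))

/-- a `t`-structure `(L, G) = (S^{≤0}, S^{≥0})` on a triangulated (full) subcategory `S`
of `D` (take `S = Set.univ` for a `t`-structure on `D` itself). -/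
structure IsTStructureOn (S L G : Set D) : Prop where
  subL : L ⊆ S
  subG : G ⊆ S
  isoL : ∀ ⦃A B : D⦄, (A ≅ B) → A ∈ L → B ∈ S → B ∈ L
  isoG : ∀ ⦃A B : D⦄, (A ≅ B) → A ∈ G → B ∈ S → B ∈ G
  hom_zero : homZero D L (shiftSet D G (-1))
  cover : ∀ A ∈ S, A ∈ starSet D L (shiftSet D G (-1))
  shiftL : L ⊆ shiftSet D L (-1)
  shiftG : shiftSet D G (-1) ⊆ G

/-- a `t`-structure `(L, G) = (D^{≤0}, D^{≥0})` on `D`. -/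
def IsTStructure (L G : Set D) : Prop := IsTStructureOn D Set.univ L G

/-- a triangulated full subcategory of `D`. -/
structure IsTriangulatedSub (S : Set D) : Prop where
  iso : isoClosed D S
  zero : ∀ Z : D, IsZero Z → Z ∈ S
  shift : ∀ (n : ℤ), ∀ A ∈ S, A⟦n⟧ ∈ S
  ext₂ : ∀ (T : Triangle D), (T ∈ distTriang D) → T.obj₁ ∈ S → T.obj₃ ∈ S → T.obj₂ ∈ S

/-- an `m`-extended heart on `D`: a full subcategory of the form
`V^{≥ -(m-1)} ∩ V^{≤ 0}` for some `t`-structure `(V^{≤0}, V^{≥0})` on `D`. -/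
def IsExtendedHeart (m : ℤ) (E : Set D) : Prop :=
  ∃ L G : Set D, IsTStructure D L G ∧ E = shiftSet D G (m - 1) ∩ L

/-- the relation `E₁ ≤ E₂` for `m`-extended hearts:
`E₁ ⊆ E₂[m] * E₂` and `E₂ ⊆ E₁ * E₁[-m]`. -/
def extHeartLE (m : ℤ) (E₁ E₂ : Set D) : Prop :=
  E₁ ⊆ starSet D (shiftSet D E₂ m) E₂ ∧ E₂ ⊆ starSet D E₁ (shiftSet D E₁ (-m))

/-! Both extended hearts are intervals `[1 - m, 0]` of t-structures, `ℰ` for `tE` and `ℋ'` for `t`.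
Since `ℋ'[m]` and `ℋ'` lie in `t^{[1-2m, 0]}`, so does `ℰ ⊆ ℋ'[m] * ℋ'`. Hence for `A ∈ ℋ'`, the
triangle `X → A → Y → X[1]` with `X ∈ ℰ`, `Y ∈ ℰ[-m]` has `X ∈ t^{≤0}` and `Y ∈ t^{≥1-m}`, and the
two rotations of the triangle put `X` and `Y` in `ℋ'`. The vanishing of `Hom(ℰ, ℰ[-m])` and
`Hom(ℰ, ℰ[-m-1])` holds because `ℰ ⊆ tE^{≤0}` while `ℰ[-m] ⊆ tE^{≥1}`. -/

section ShiftSet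

variable {C : Type*} [Category C] [HasShift C ℤ]

lemma isoClosed_shiftSet (S : Set C) (n : ℤ) : isoClosed C (shiftSet C S n) := by
  rintro X Y e ⟨B, hB, ⟨e'⟩⟩
  exact ⟨B, hB, ⟨e.symm ≪≫ e'⟩⟩

lemma shiftSet_mono {S T : Set C} (h : S ⊆ T) (n : ℤ) : shiftSet C S n ⊆ shiftSet C T n := by
  rintro X ⟨B, hB, e⟩
  exact ⟨B, h hB, e⟩

lemma shiftSet_zero {S : Set C} (hS : isoClosed C S) : shiftSet C S 0 = S := by
  ext X
  constructor
  · rintro ⟨B, hB, ⟨e⟩⟩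
    exact hS (e ≪≫ (shiftFunctorZero C ℤ).app B).symm hB
  · intro hX
    exact ⟨X, hX, ⟨((shiftFunctorZero C ℤ).app X).symm⟩⟩

lemma shift_mem_shiftSet {S : Set C} {X : C} {n a n' : ℤ} (h : n + a = n')
    (hX : X ∈ shiftSet C S n) : X⟦a⟧ ∈ shiftSet C S n' := by
  obtain ⟨B, hB, ⟨e⟩⟩ := hX
  exact ⟨B, hB, ⟨(shiftFunctor C a).mapIso e ≪≫ (shiftFunctorAdd' C n a n' h).symm.app B⟩⟩

end ShiftSet

lemma AdditiveClosed.inter {C : Type*} [Category C] [Preadditive C] [HasBinaryBiproducts C]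
    {S T : Set C} (hS : AdditiveClosed C S) (hT : AdditiveClosed C T) :
    AdditiveClosed C (S ∩ T) where
  iso _ _ e h := ⟨hS.iso e h.1, hT.iso e h.2⟩
  zero Z hZ := ⟨hS.zero Z hZ, hT.zero Z hZ⟩
  sum A hA B hB := ⟨hS.sum A hA.1 B hB.1, hT.sum A hA.2 B hB.2⟩
  summand A hA X i p hip := ⟨hS.summand A hA.1 X i p hip, hT.summand A hA.2 X i p hip⟩

lemma IsSTorsionPairIn.of_additiveClosed_inter {C : Type*} [Category C] [Preadditive C]
    [HasZeroObject C] [HasShift C ℤ] [∀ n : ℤ, (shiftFunctor C n).Additive] [Pretriangulated C]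
    [HasBinaryBiproducts C] {H T F : Set C}
    (hH : AdditiveClosed C H) (hT : AdditiveClosed C T) (hF : AdditiveClosed C F)
    (hom_zero : homZero C (H ∩ T) (H ∩ F))
    (neg_hom_zero : ∀ A ∈ H ∩ T, ∀ B ∈ H ∩ F, ∀ f : A ⟶ B⟦(-1 : ℤ)⟧, f = 0)
    (cover : ∀ A ∈ H, A ∈ starSet C (H ∩ T) (H ∩ F)) :
    IsSTorsionPairIn C H (H ∩ T) (H ∩ F) where
  subT := Set.inter_subset_left
  subF := Set.inter_subset_left
  isoT _ _ e hA hB := ⟨hB, hT.iso e hA.2⟩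
  isoF _ _ e hA hB := ⟨hB, hF.iso e hA.2⟩
  zeroT Z hZ hZH := ⟨hZH, hT.zero Z hZ⟩
  zeroF Z hZ hZH := ⟨hZH, hF.zero Z hZ⟩
  sumT := (hH.inter hT).sum
  sumF := (hH.inter hF).sum
  summandT A hA X i p hip _ := (hH.inter hT).summand A hA X i p hip
  summandF A hA X i p hip _ := (hH.inter hF).summand A hA X i p hip
  hom_zero := hom_zero
  cover := cover
  neg_hom_zero := neg_hom_zero

namespace CategoryTheory.Triangulated.TStructure

variable {C : Type*} [Category C] [Preadditive C] [HasZeroObject C] [HasShift C ℤ]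
  [∀ n : ℤ, (shiftFunctor C n).Additive] [Pretriangulated C] (t : TStructure C)

def Icc (a b : ℤ) : Set C := {X | t.IsGE X a ∧ t.IsLE X b}

lemma isGE₁ (T : Triangle C) (hT : T ∈ distTriang C) (n : ℤ) (h₂ : t.IsGE T.obj₂ n)
    (h₃ : t.IsGE T.obj₃ n) : t.IsGE T.obj₁ n :=
  have : t.IsGE (T.obj₃⟦(-1 : ℤ)⟧) (n + 1) := t.isGE_shift _ n (-1) (n + 1)
  t.isGE₂ _ (inv_rot_of_distTriang T hT) n (t.isGE_of_ge (T.obj₃⟦(-1 : ℤ)⟧) n (n + 1)) h₂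

lemma isLE₃ (T : Triangle C) (hT : T ∈ distTriang C) (n : ℤ) (h₁ : t.IsLE T.obj₁ n)
    (h₂ : t.IsLE T.obj₂ n) : t.IsLE T.obj₃ n :=
  have : t.IsLE (T.obj₁⟦(1 : ℤ)⟧) (n - 1) := t.isLE_shift _ n 1 (n - 1)
  t.isLE₂ _ (rot_of_distTriang T hT) n h₂ (t.isLE_of_le (T.obj₁⟦(1 : ℤ)⟧) (n - 1) n)

lemma isLE_of_retract {X A : C} (i : X ⟶ A) (p : A ⟶ X) (hip : i ≫ p = 𝟙 X) (n : ℤ)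
    [t.IsLE A n] : t.IsLE X n := by
  rw [t.isLE_iff_orthogonal n (n + 1) rfl]
  intro Y f _
  rw [← id_comp f, ← hip, assoc, t.zero (p ≫ f) n (n + 1), comp_zero]

lemma isGE_of_retract {X A : C} (i : X ⟶ A) (p : A ⟶ X) (hip : i ≫ p = 𝟙 X) (n : ℤ)
    [t.IsGE A n] : t.IsGE X n := by
  rw [t.isGE_iff_orthogonal (n - 1) n (by omega)]
  intro Y f _
  rw [← comp_id f, ← hip, ← assoc, t.zero (f ≫ i) (n - 1) n, zero_comp]

lemma shiftSet_Icc (a b n : ℤ) : shiftSet C (t.Icc a b) n = t.Icc (a - n) (b - n) := by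
  ext X
  constructor
  · rintro ⟨Y, ⟨_, _⟩, ⟨e⟩⟩
    have := t.isGE_shift Y a n (a - n)
    have := t.isLE_shift Y b n (b - n)
    exact ⟨t.isGE_of_iso e.symm _, t.isLE_of_iso e.symm _⟩
  · rintro ⟨_, _⟩
    exact ⟨X⟦-n⟧, ⟨t.isGE_shift X (a - n) (-n) a, t.isLE_shift X (b - n) (-n) b⟩,
      ⟨(shiftNegShift X n).symm⟩⟩

lemma starSet_Icc_subset {a b a₁ b₁ a₂ b₂ : ℤ} (ha₁ : a ≤ a₁) (ha₂ : a ≤ a₂) (hb₁ : b₁ ≤ b)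
    (hb₂ : b₂ ≤ b) : starSet C (t.Icc a₁ b₁) (t.Icc a₂ b₂) ⊆ t.Icc a b := by
  rintro X ⟨X₁, X₃, f, g, h, ⟨_, _⟩, ⟨_, _⟩, hT⟩
  exact ⟨t.isGE₂ _ hT a (t.isGE_of_ge X₁ a a₁) (t.isGE_of_ge X₃ a a₂),
    t.isLE₂ _ hT b (t.isLE_of_le X₁ b₁ b) (t.isLE_of_le X₃ b₂ b)⟩

lemma additiveClosed_Icc [HasBinaryBiproducts C] (a b : ℤ) : AdditiveClosed C (t.Icc a b) where
  iso _ _ e h := by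
    obtain ⟨_, _⟩ := h
    exact ⟨t.isGE_of_iso e a, t.isLE_of_iso e b⟩
  zero Z hZ := ⟨t.isGE_of_isZero hZ a, t.isLE_of_isZero hZ b⟩
  sum A hA B hB := ⟨t.isGE₂ _ (binaryBiproductTriangle_distinguished A B) a hA.1 hB.1,
    t.isLE₂ _ (binaryBiproductTriangle_distinguished A B) b hA.2 hB.2⟩
  summand A hA X i p hip := by
    obtain ⟨_, _⟩ := hA
    exact ⟨t.isGE_of_retract i p hip a, t.isLE_of_retract i p hip b⟩

end CategoryTheory.Triangulated.TStructure

namespace IsTStructure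

open Triangulated

variable {C : Type*} [Category C] [Preadditive C] [HasZeroObject C] [HasShift C ℤ]
  [∀ n : ℤ, (shiftFunctor C n).Additive] [Pretriangulated C] {L G : Set C}

lemma isoClosed_le (ht : IsTStructure C L G) : isoClosed C L :=
  fun _ _ e h => ht.isoL e h trivial

lemma isoClosed_ge (ht : IsTStructure C L G) : isoClosed C G :=
  fun _ _ e h => ht.isoG e h trivial

def toTStructure (ht : IsTStructure C L G) : TStructure C where
  le n := shiftSet C L (-n)
  ge n := shiftSet C G (-n)
  le_isClosedUnderIsomorphisms n := ⟨fun e h => isoClosed_shiftSet L (-n) e h⟩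
  ge_isClosedUnderIsomorphisms n := ⟨fun e h => isoClosed_shiftSet G (-n) e h⟩
  le_shift n a n' h _ hX := shift_mem_shiftSet (by omega) hX
  ge_shift n a n' h _ hX := shift_mem_shiftSet (by omega) hX
  zero' X Y f hX hY := by
    rw [neg_zero, shiftSet_zero ht.isoClosed_le] at hX
    exact ht.hom_zero X hX Y hY f
  le_zero_le X hX := by
    rw [neg_zero, shiftSet_zero ht.isoClosed_le] at hX
    exact ht.shiftL hX
  ge_one_le X hX := by
    rw [neg_zero, shiftSet_zero ht.isoClosed_ge]
    exact ht.shiftG hX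
  exists_triangle_zero_one A := by
    obtain ⟨X, Y, f, g, h, hX, hY, hT⟩ := ht.cover A trivial
    rw [← shiftSet_zero ht.isoClosed_le, ← neg_zero] at hX
    exact ⟨X, Y, hX, hY, f, g, h, hT⟩

lemma Icc_toTStructure (ht : IsTStructure C L G) (a b : ℤ) :
    ht.toTStructure.Icc a b = shiftSet C G (-a) ∩ shiftSet C L (-b) := by
  ext X
  exact and_congr (ht.toTStructure.ge_iff_isGE X a).symm (ht.toTStructure.le_iff_isLE X b).symm

end IsTStructure

lemma IsExtendedHeart.exists_eq_Icc {C : Type*} [Category C] [Preadditive C] [HasZeroObject C]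
    [HasShift C ℤ] [∀ n : ℤ, (shiftFunctor C n).Additive] [Pretriangulated C] {m : ℤ} {E : Set C}
    (hE : IsExtendedHeart C m E) : ∃ t : Triangulated.TStructure C, E = t.Icc (1 - m) 0 := by
  obtain ⟨L, G, ht, rfl⟩ := hE
  refine ⟨ht.toTStructure, ?_⟩
  rw [ht.Icc_toTStructure, neg_sub, neg_zero, shiftSet_zero ht.isoClosed_le]

namespace CategoryTheory.Triangulated.TStructure

variable {C : Type*} [Category C] [Preadditive C] [HasZeroObject C] [HasShift C ℤ]
  [∀ n : ℤ, (shiftFunctor C n).Additive] [Pretriangulated C]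

theorem isSTorsionPairIn_of_extHeartLE [HasBinaryBiproducts C] {m : ℤ} (hm : 0 ≤ m)
    (t tE : TStructure C) (hle : extHeartLE C m (tE.Icc (1 - m) 0) (t.Icc (1 - m) 0)) :
    IsSTorsionPairIn C (t.Icc (1 - m) 0) (t.Icc (1 - m) 0 ∩ tE.Icc (1 - m) 0)
      (t.Icc (1 - m) 0 ∩ shiftSet C (tE.Icc (1 - m) 0) (-m)) := by
  obtain ⟨hEH, hHE⟩ := hle
  have hE : tE.Icc (1 - m) 0 ⊆ t.Icc (1 - 2 * m) 0 := by
    rw [t.shiftSet_Icc] at hEH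
    exact hEH.trans (t.starSet_Icc_subset (by omega) (by omega) (by omega) le_rfl)
  have hF : shiftSet C (tE.Icc (1 - m) 0) (-m) = tE.Icc 1 m := by
    rw [tE.shiftSet_Icc]
    congr 1 <;> ring
  refine IsSTorsionPairIn.of_additiveClosed_inter (t.additiveClosed_Icc _ _)
    (tE.additiveClosed_Icc _ _) (hF ▸ tE.additiveClosed_Icc _ _) ?_ ?_ ?_
  · rintro A ⟨-, -, _⟩ B ⟨-, hB⟩ f
    obtain ⟨_, -⟩ := hF ▸ hB
    exact tE.zero f 0 1
  · rintro A ⟨-, -, _⟩ B ⟨-, hB⟩ f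
    obtain ⟨_, -⟩ := hF ▸ hB
    have := tE.isGE_shift B 1 (-1) 2
    exact tE.zero f 0 2
  · intro A hA
    obtain ⟨X, Y, f, g, h, hX, hY, hT⟩ := hHE hA
    have hYt := shiftSet_mono hE (-m) hY
    rw [t.shiftSet_Icc] at hYt
    obtain ⟨_, -⟩ := hYt
    have hXle : t.IsLE X 0 := (hE hX).2
    have hYge : t.IsGE Y (1 - m) := t.isGE_of_ge Y (1 - m) (1 - 2 * m - -m)
    exact ⟨X, Y, f, g, h, ⟨⟨t.isGE₁ _ hT _ hA.1 hYge, hXle⟩, hX⟩,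
      ⟨⟨hYge, t.isLE₃ _ hT _ hXle hA.2⟩, hY⟩, hT⟩

end CategoryTheory.Triangulated.TStructure

/-- Lemma 4.7: if `ℰ` and `ℋ'` are `m`-extended hearts on `D` with
`ℰ ≤ ℋ'`, then `(ℋ' ∩ ℰ, ℋ' ∩ ℰ[-m])` is an `s`-torsion pair in `ℋ'`. -/
theorem stmt14 (m : ℤ) (hm : 1 ≤ m) (E H' : Set D)
    (hE : IsExtendedHeart D m E) (hH' : IsExtendedHeart D m H')
    (hle : extHeartLE D m E H') :
    IsSTorsionPairIn D H' (H' ∩ E) (H' ∩ shiftSet D E (-m)) := by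
  obtain ⟨tE, rfl⟩ := hE.exists_eq_Icc
  obtain ⟨t, rfl⟩ := hH'.exists_eq_Icc
  exact Triangulated.TStructure.isSTorsionPairIn_of_extHeartLE (by omega) t tE hle
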